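/- Let F be a finite field with q elements, b, c, d ∈ F[x] (characteristic 2, real case), let ε₀ generate U(R) with k = deg ε₀ > 0. Then every solution ω = u + Δv ∈ R of N(ω) = d with 0 ≤ deg ω ≤ k−1 satisfies deg v ≤ max(deg d, k − 1) − deg b, where degrees are taken under the embedding R ↪ F((1/x)). (Key identity: ω satisfies ω² + (bv)ω + d = 0.) -/

import Mathlib

open Polynomial

/-! The key identity says that ω = u + Δv is a root of t² + (bv)t + d: in characteristic 2 the
trace of ω is bv. Comparing orders in F((1/x)),
deg b + deg v + deg ω ≤ max (2 deg ω) (deg d), and 0 ≤ deg ω ≤ k − 1 turns this into the bound.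
The only delicate case is ω = 0, which would make u/v a root of t² + bt + c in F(x). -/

/-- The image of a polynomial in F((1/x)): evaluate at x = X⁻¹ (the degree of
a Laurent series is minus its order). -/
noncomputable def polyToLaurentInv (F : Type) [Field F] (p : Polynomial F) :
    LaurentSeries F :=
  Polynomial.aeval (HahnSeries.single (-1 : ℤ) (1 : F)) p

theorem CharTwo.sq_add_mul_add_norm_eq_zero {R : Type*} [CommRing R] [CharP R 2]
    {B C Δ : R} (hΔ : Δ ^ 2 + B * Δ + C = 0) (U V : R) :
    (U + Δ * V) ^ 2 + B * V * (U + Δ * V) + (U ^ 2 + B * U * V + C * V ^ 2) = 0 := by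
  linear_combination V ^ 2 * hΔ + (U ^ 2 + B * U * V + U * Δ * V) * CharTwo.two_eq_zero (R := R)

theorem eq_zero_of_sq_add_mul_add_mul_sq_eq_zero {K : Type*} [Field K] {B C : K}
    (hroot : ∀ ρ : K, ρ ^ 2 + B * ρ + C ≠ 0) {U V : K}
    (h : U ^ 2 + B * U * V + C * V ^ 2 = 0) : V = 0 := by
  by_contra hV
  apply hroot (U / V)
  field_simp
  linear_combination h

theorem HahnSeries.min_order_le_of_sq_add_mul_add_eq_zero {Γ R : Type*} [AddCommMonoid Γ]
    [LinearOrder Γ] [IsOrderedCancelAddMonoid Γ] [CommRing R] [NoZeroDivisors R]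
    {x y z : HahnSeries Γ R} (hx : x ≠ 0) (hy : y ≠ 0) (h : y ^ 2 + x * y + z = 0) :
    min (y.order + y.order) z.order ≤ x.order + y.order := by
  have hxy : x * y = -(y * y + z) := by linear_combination h
  rw [← order_mul hy hy, ← order_mul hx hy, hxy, order_neg]
  exact min_order_le_order_add (by rw [← neg_ne_zero, ← hxy]; exact mul_ne_zero hx hy)

instance HahnSeries.instCharP {Γ R : Type*} [AddCommMonoid Γ] [PartialOrder Γ]
    [IsOrderedCancelAddMonoid Γ] [NonAssocSemiring R] (p : ℕ) [CharP R p] : CharP (HahnSeries Γ R) p :=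
  charP_of_injective_ringHom HahnSeries.C_injective p

section polyToLaurentInv

variable {F : Type} [Field F]

theorem polyToLaurentInv_add (p q : F[X]) :
    polyToLaurentInv F (p + q) = polyToLaurentInv F p + polyToLaurentInv F q :=
  map_add _ p q

theorem polyToLaurentInv_mul (p q : F[X]) :
    polyToLaurentInv F (p * q) = polyToLaurentInv F p * polyToLaurentInv F q :=
  map_mul _ p q

theorem polyToLaurentInv_pow (p : F[X]) (n : ℕ) :
    polyToLaurentInv F (p ^ n) = polyToLaurentInv F p ^ n :=
  map_pow _ p n

theorem polyToLaurentInv_monomial (n : ℕ) (a : F) :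
    polyToLaurentInv F (monomial n a) = HahnSeries.single (-(n : ℤ)) a := by
  have hC : algebraMap F (LaurentSeries F) a = HahnSeries.single 0 a := by
    rw [HahnSeries.algebraMap_apply', ← PowerSeries.C_eq_algebraMap, HahnSeries.ofPowerSeries_C,
      HahnSeries.C_apply]
  simp [polyToLaurentInv, aeval_monomial, HahnSeries.single_pow, hC]

theorem coeff_polyToLaurentInv (p : F[X]) (i : ℕ) :
    (polyToLaurentInv F p).coeff (-(i : ℤ)) = p.coeff i := by
  induction p using Polynomial.induction_on' with
  | add p q hp hq => rw [polyToLaurentInv_add, HahnSeries.coeff_add, coeff_add, hp, hq]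
  | monomial n a =>
    rw [polyToLaurentInv_monomial, HahnSeries.coeff_single, coeff_monomial]
    simp [eq_comm]

theorem polyToLaurentInv_injective : Function.Injective (polyToLaurentInv F) := by
  intro p q h
  ext i
  rw [← coeff_polyToLaurentInv, h, coeff_polyToLaurentInv]

theorem polyToLaurentInv_eq_zero_iff {p : F[X]} : polyToLaurentInv F p = 0 ↔ p = 0 :=
  polyToLaurentInv_injective.eq_iff' (map_zero _)

theorem order_polyToLaurentInv (p : F[X]) :
    (polyToLaurentInv F p).order = -(p.natDegree : ℤ) := by
  rcases eq_or_ne p 0 with rfl | hp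
  · simp [polyToLaurentInv]
  have hne : polyToLaurentInv F p ≠ 0 := polyToLaurentInv_eq_zero_iff.not.mpr hp
  refine le_antisymm (HahnSeries.order_le_of_coeff_ne_zero ?_)
    ((HahnSeries.le_order_iff_forall hne).mpr ?_)
  · rwa [coeff_polyToLaurentInv, ← leadingCoeff, leadingCoeff_ne_zero]
  · intro j hj
    obtain ⟨i, rfl⟩ : ∃ i : ℕ, j = -(i : ℤ) := ⟨(-j).toNat, by omega⟩
    rw [coeff_polyToLaurentInv]
    exact coeff_eq_zero_of_natDegree_lt (by omega)

end polyToLaurentInv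

theorem degree_bound_for_small_solutions_general
    (F : Type) [Field F] [CharP F 2] (b c d : Polynomial F)
    (hnoroot : ∀ ρ : RatFunc F,
      ρ ^ 2 + algebraMap (Polynomial F) (RatFunc F) b * ρ
        + algebraMap (Polynomial F) (RatFunc F) c ≠ 0)
    (Δ₀ : LaurentSeries F)
    (hΔ : Δ₀ ^ 2 + polyToLaurentInv F b * Δ₀ + polyToLaurentInv F c = 0)
    (k : ℕ) :
    ∀ u v : Polynomial F, u ^ 2 + b * u * v + c * v ^ 2 = d →
      -- 0 ≤ deg ω ≤ k − 1, i.e. −(k−1) ≤ order ω ≤ 0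
      -((k : ℤ) - 1) ≤ (polyToLaurentInv F u + Δ₀ * polyToLaurentInv F v).order →
      (polyToLaurentInv F u + Δ₀ * polyToLaurentInv F v).order ≤ 0 →
      v.degree + b.degree ≤ max d.degree ((k - 1 : ℕ) : WithBot ℕ) := by
  intro u v hN hlow hupp
  have hroot :=
    CharTwo.sq_add_mul_add_norm_eq_zero hΔ (polyToLaurentInv F u) (polyToLaurentInv F v)
  simp only [← polyToLaurentInv_pow, ← polyToLaurentInv_mul, ← polyToLaurentInv_add, hN] at hroot
  set ω := polyToLaurentInv F u + Δ₀ * polyToLaurentInv F v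
  rw [← degree_mul, mul_comm]
  rcases eq_or_ne (b * v) 0 with hbv | hbv
  · simp [hbv]
  have hω : ω ≠ 0 := by
    intro hω
    have hd : d = 0 := polyToLaurentInv_eq_zero_iff.mp (by simpa [hω] using hroot)
    have hv : v = 0 := RatFunc.algebraMap_injective F <| by
      rw [map_zero]
      refine eq_zero_of_sq_add_mul_add_mul_sq_eq_zero hnoroot (U := algebraMap _ _ u) ?_
      simpa [hd] using congrArg (algebraMap F[X] (RatFunc F)) hN
    exact hbv (by rw [hv, mul_zero])
  have hord := HahnSeries.min_order_le_of_sq_add_mul_add_eq_zero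
    (polyToLaurentInv_eq_zero_iff.not.mpr hbv) hω hroot
  rw [order_polyToLaurentInv, order_polyToLaurentInv] at hord
  have hnat : (b * v).natDegree ≤ max d.natDegree (k - 1) := by omega
  rcases eq_or_ne d 0 with rfl | hd
  · simpa using degree_le_of_natDegree_le hnat
  · rw [degree_eq_natDegree hd]
    exact degree_le_of_natDegree_le hnat

/-- Real case: ε₀ = x₀ + Δy₀ generates U(R) and has degree k > 0.  Every
solution ω = u + Δv of N(ω) = u² + buv + cv² = d with 0 ≤ deg ω ≤ k − 1
satisfies deg v ≤ max(deg d, k − 1) − deg b. -/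
theorem degree_bound_for_small_solutions
    (F : Type) [Field F] [Fintype F] [CharP F 2] (b c d : Polynomial F)
    (hb : 1 ≤ b.natDegree) (hc : c ≠ 0) (hdeg : c.natDegree < 2 * b.natDegree)
    (hnoroot : ∀ ρ : RatFunc F,
      ρ ^ 2 + algebraMap (Polynomial F) (RatFunc F) b * ρ
        + algebraMap (Polynomial F) (RatFunc F) c ≠ 0)
    (Δ₀ : LaurentSeries F)
    (hΔ : Δ₀ ^ 2 + polyToLaurentInv F b * Δ₀ + polyToLaurentInv F c = 0)
    (hΔpos : Δ₀.order < 0)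
    (x₀ y₀ : Polynomial F) (k : ℕ) (hk : 0 < k)
    (hnorm : x₀ ^ 2 + b * x₀ * y₀ + c * y₀ ^ 2 = 1)
    -- ε₀ has degree k
    (hdegk : (polyToLaurentInv F x₀ + Δ₀ * polyToLaurentInv F y₀).order = -(k : ℤ))
    -- ε₀ generates U(R)
    (hgen : ∀ x y : Polynomial F, x ^ 2 + b * x * y + c * y ^ 2 = 1 →
      ∃ n : ℤ,
        polyToLaurentInv F x + Δ₀ * polyToLaurentInv F y
          = (polyToLaurentInv F x₀ + Δ₀ * polyToLaurentInv F y₀) ^ n) :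
    ∀ u v : Polynomial F, u ^ 2 + b * u * v + c * v ^ 2 = d →
      -- 0 ≤ deg ω ≤ k − 1, i.e. −(k−1) ≤ order ω ≤ 0
      -((k : ℤ) - 1) ≤ (polyToLaurentInv F u + Δ₀ * polyToLaurentInv F v).order →
      (polyToLaurentInv F u + Δ₀ * polyToLaurentInv F v).order ≤ 0 →
      v.degree + b.degree ≤ max d.degree ((k - 1 : ℕ) : WithBot ℕ) :=
  degree_bound_for_small_solutions_general F b c d hnoroot Δ₀ hΔ k
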